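/- Let {E_i : i ∈ Γ_*} be a Moran construction on a complete metric space satisfying (M3) and the uniform finite clustering property, and let 0 < ᾱ < 1 be such that max_{i ∈ Γ_n} diam(E_i) ≤ C ᾱ^n. Then for every compact A ⊆ Γ and every microset A' of A, dim_A(π(A')) ≤ lim_{n→∞} log N_n(A) / log(ᾱ^{-n}). -/

import Mathlib

open Metric Filter Set

/-- The `2^{-n}`-metric on the sequence space `Σ = {1,…,κ}^ℕ`. -/
noncomputable local instance seqMetric (κ : ℕ) : MetricSpace (ℕ → Fin κ) :=
  PiNat.metricSpace

/-- The left shift on `Σ = {1,…,κ}^ℕ`. -/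
def shiftMap {κ : ℕ} (x : ℕ → Fin κ) : ℕ → Fin κ := fun n => x (n + 1)

/-- The prefix of length `n` of an infinite word. -/
def pre {κ : ℕ} (x : ℕ → Fin κ) (n : ℕ) : List (Fin κ) := List.ofFn (fun k : Fin n => x k)

/-- The cylinder set `[w]` of a finite word `w`. -/
def cylSet {κ : ℕ} (w : List (Fin κ)) : Set (ℕ → Fin κ) := {x | pre x w.length = w}

/-- `w` belongs to `Γ_*`, the set of finite prefixes of elements of `Γ`. -/
def isPrefixWord {κ : ℕ} (Γ : Set (ℕ → Fin κ)) (w : List (Fin κ)) : Prop :=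
  ∃ x ∈ Γ, pre x w.length = w

/-- The symbolic magnification `β_w(A) = σ^{|w|}(A ∩ [w])`. -/
def miniset {κ : ℕ} (w : List (Fin κ)) (A : Set (ℕ → Fin κ)) : Set (ℕ → Fin κ) :=
  (fun x => fun n => x (n + w.length)) '' (A ∩ cylSet w)

/-- `A'` is a microset of `A` (relative to `Γ`). -/
def IsMicroset {κ : ℕ} (Γ A A' : Set (ℕ → Fin κ)) : Prop :=
  A' ⊆ Γ ∧ IsCompact A' ∧ ∃ w : ℕ → List (Fin κ),
    Tendsto (fun n => EMetric.hausdorffEdist (miniset (w n) A) A') atTop (nhds 0)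

/-- `N_n(A)`: the maximal number of cylinders `[i]`, `i ∈ Γ_n`, met by a microset
of `A`. -/
noncomputable def NN {κ : ℕ} (Γ A : Set (ℕ → Fin κ)) (n : ℕ) : ℕ :=
  sSup {k : ℕ | ∃ A' : Set (ℕ → Fin κ), IsMicroset Γ A A' ∧
    k = {w : List (Fin κ) | w.length = n ∧ isPrefixWord Γ w ∧
      (A' ∩ cylSet w).Nonempty}.ncard}

/-- `Γ(r) = {i ∈ Γ_* : diam(E_i) ≤ r < diam(E_{i⁻})}`. -/
def GammaR {X : Type*} [MetricSpace X] {κ : ℕ} (Γ : Set (ℕ → Fin κ))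
    (E : List (Fin κ) → Set X) (r : ℝ) : Set (List (Fin κ)) :=
  {w | isPrefixWord Γ w ∧ w ≠ [] ∧ diam (E w) ≤ r ∧ r < diam (E w.dropLast)}

/-- `Γ(x,r) = {i ∈ Γ(r) : E_i ∩ B(x,r) ≠ ∅}`. -/
def GammaXR {X : Type*} [MetricSpace X] {κ : ℕ} (Γ : Set (ℕ → Fin κ))
    (E : List (Fin κ) → Set X) (x : X) (r : ℝ) : Set (List (Fin κ)) :=
  {w ∈ GammaR Γ E r | (E w ∩ ball x r).Nonempty}

/-- The Assouad dimension of a set in a metric space. -/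
noncomputable def assouadDim {X : Type*} [MetricSpace X] (A : Set X) : ℝ :=
  sInf {t : ℝ | ∃ C : ℝ, 1 ≤ C ∧ ∀ x ∈ A, ∀ R u : ℝ, 0 < u → u < R →
    ∃ F : Finset X, ↑F ⊆ A ∧ (F.card : ℝ) ≤ C * (R / u) ^ t ∧
      A ∩ ball x R ⊆ ⋃ y ∈ F, ball y u}

namespace Scratch
variable {κ : ℕ}

/-- shift by k -/
def shiftK (k : ℕ) (x : ℕ → Fin κ) : ℕ → Fin κ := fun n => x (n + k)

@[simp] lemma pre_length (x : ℕ → Fin κ) (n : ℕ) : (pre x n).length = n := by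
  simp [pre]

lemma pre_succ (x : ℕ → Fin κ) (k : ℕ) : pre x (k+1) = (pre x k).concat (x k) := by
  simp only [pre, List.concat_eq_append, List.ofFn_succ']
  congr 1

lemma pre_add (x : ℕ → Fin κ) (n m : ℕ) :
    pre x (n + m) = pre x n ++ pre (shiftK n x) m := by
  induction m with
  | zero => simp [pre]
  | succ m ih =>
      rw [← Nat.add_assoc, pre_succ, ih, pre_succ, List.concat_eq_append,
        List.concat_eq_append, List.append_assoc]
      simp [shiftK, Nat.add_comm]

lemma mem_cylSet_iff {x : ℕ → Fin κ} {w : List (Fin κ)} :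
    x ∈ cylSet w ↔ pre x w.length = w := Iff.rfl

lemma pre_eq_iff {x : ℕ → Fin κ} {w : List (Fin κ)} :
    pre x w.length = w ↔ ∀ i : Fin w.length, x i = w.get i := by
  constructor
  · intro h i
    have h2 := List.get_of_eq h.symm i
    rw [h2]
    simp [pre, List.get_ofFn]
  · intro h
    apply List.ext_get (by simp)
    intro i h1 h2
    simpa [pre, List.get_ofFn] using h ⟨i, h2⟩

lemma isClosed_cylSet (w : List (Fin κ)) : IsClosed (cylSet w) := by
  have : cylSet w = ⋂ i : Fin w.length, {x : ℕ → Fin κ | x i = w.get i} := by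
    ext x; simp [mem_cylSet_iff, pre_eq_iff]
  rw [this]
  refine isClosed_iInter fun i => ?_
  have : {x : ℕ → Fin κ | x i = w.get i} = (fun x : ℕ → Fin κ => x i) ⁻¹' {w.get i} := rfl
  rw [this]
  exact IsClosed.preimage (continuous_apply (i : ℕ)) isClosed_singleton

lemma continuous_shiftK (k : ℕ) : Continuous (shiftK (κ := κ) k) :=
  continuous_pi fun n => continuous_apply (n + k)

lemma pre_mem_cylSet (x : ℕ → Fin κ) (n : ℕ) : x ∈ cylSet (pre x n) := by
  simp [mem_cylSet_iff, pre_length, pre_eq_iff, pre, List.get_ofFn]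

lemma mem_cylSet_append {x : ℕ → Fin κ} {v w : List (Fin κ)} :
    x ∈ cylSet (v ++ w) ↔ x ∈ cylSet v ∧ shiftK v.length x ∈ cylSet w := by
  simp only [mem_cylSet_iff, List.length_append]
  rw [pre_add]
  constructor
  · intro h
    have h2 := List.append_inj h (by simp)
    exact ⟨h2.1, h2.2⟩
  · rintro ⟨h1, h2⟩; rw [h1, h2]

lemma miniset_eq (w : List (Fin κ)) (A : Set (ℕ → Fin κ)) :
    miniset w A = shiftK w.length '' (A ∩ cylSet w) := by
  rfl

lemma shiftK_mem {Γ : Set (ℕ → Fin κ)} (hΓs : shiftMap '' Γ ⊆ Γ) (k : ℕ)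
    {x : ℕ → Fin κ} (hx : x ∈ Γ) : shiftK k x ∈ Γ := by
  induction k with
  | zero => exact hx
  | succ k ih =>
      have : shiftK (k+1) x = shiftMap (shiftK k x) := by
        funext n; simp only [shiftK, shiftMap]; exact congrArg x (by omega)
      rw [this]
      exact hΓs ⟨_, ih, rfl⟩

lemma miniset_subset {Γ A : Set (ℕ → Fin κ)} (hΓs : shiftMap '' Γ ⊆ Γ) (hA : A ⊆ Γ)
    (w : List (Fin κ)) : miniset w A ⊆ Γ := by
  rw [miniset_eq]
  rintro _ ⟨x, ⟨hxA, _⟩, rfl⟩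
  exact shiftK_mem hΓs _ (hA hxA)

lemma miniset_compact {A : Set (ℕ → Fin κ)} (hAc : IsCompact A) (w : List (Fin κ)) :
    IsCompact (miniset w A) := by
  rw [miniset_eq]
  exact ((hAc.inter_right (isClosed_cylSet w)).image (continuous_shiftK _))

lemma miniset_isMicroset {Γ A : Set (ℕ → Fin κ)} (hΓs : shiftMap '' Γ ⊆ Γ) (hA : A ⊆ Γ)
    (hAc : IsCompact A) (w : List (Fin κ)) : IsMicroset Γ A (miniset w A) :=
  ⟨miniset_subset hΓs hA w, miniset_compact hAc w,
    ⟨fun _ => w, by simp [EMetric.hausdorffEdist, Metric.hausdorffEDist_self, tendsto_const_nhds]⟩⟩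

lemma miniset_inter_cyl {A : Set (ℕ → Fin κ)} {p s : List (Fin κ)} :
    (miniset p A ∩ cylSet s).Nonempty ↔ (A ∩ cylSet (p ++ s)).Nonempty := by
  rw [miniset_eq]
  constructor
  · rintro ⟨_, ⟨x, ⟨hxA, hxp⟩, rfl⟩, hs⟩
    exact ⟨x, hxA, mem_cylSet_append.2 ⟨hxp, hs⟩⟩
  · rintro ⟨x, hxA, hx⟩
    rcases mem_cylSet_append.1 hx with ⟨h1, h2⟩
    exact ⟨shiftK p.length x, ⟨x, ⟨hxA, h1⟩, rfl⟩, h2⟩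

/-- the set of words of length m with property P is finite with card ≤ κ^m -/
lemma words_finite (m : ℕ) (P : List (Fin κ) → Prop) :
    {w : List (Fin κ) | w.length = m ∧ P w}.Finite := by
  apply Set.Finite.subset (Set.finite_range (List.ofFn : (Fin m → Fin κ) → List (Fin κ)))
  rintro w ⟨hlen, -⟩
  refine ⟨fun i => w.get (Fin.cast hlen.symm i), ?_⟩
  apply List.ext_get (by simp [hlen])
  intro i h1 h2
  simp [List.get_ofFn]

lemma words_ncard_le (m : ℕ) (P : List (Fin κ) → Prop) :
    {w : List (Fin κ) | w.length = m ∧ P w}.ncard ≤ κ ^ m := by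
  have h1 : {w : List (Fin κ) | w.length = m ∧ P w} ⊆
      Set.range (List.ofFn : (Fin m → Fin κ) → List (Fin κ)) := by
    rintro w ⟨hlen, -⟩
    refine ⟨fun i => w.get (Fin.cast hlen.symm i), ?_⟩
    apply List.ext_get (by simp [hlen])
    intro i h1 h2
    simp [List.get_ofFn]
  calc {w : List (Fin κ) | w.length = m ∧ P w}.ncard
      ≤ (Set.range (List.ofFn : (Fin m → Fin κ) → List (Fin κ))).ncard :=
        Set.ncard_le_ncard h1 (Set.finite_range _)
    _ ≤ (Set.univ : Set (Fin m → Fin κ)).ncard := by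
        rw [← Set.image_univ]; exact Set.ncard_image_le (Set.finite_univ)
    _ = κ ^ m := by simp [Set.ncard_univ, Nat.card_eq_fintype_card]

lemma NN_le_pow (Γ A : Set (ℕ → Fin κ)) (m : ℕ) : NN Γ A m ≤ κ ^ m := by
  apply csSup_le'
  rintro k ⟨A', -, rfl⟩
  have := words_ncard_le (κ := κ) m (fun w => isPrefixWord Γ w ∧ (A' ∩ cylSet w).Nonempty)
  have heq : {w : List (Fin κ) | w.length = m ∧ isPrefixWord Γ w ∧ (A' ∩ cylSet w).Nonempty}
      = {w : List (Fin κ) | w.length = m ∧ (isPrefixWord Γ w ∧ (A' ∩ cylSet w).Nonempty)} := rfl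
  rw [heq]
  exact this

lemma cyl_nonempty_of_close {S T : Set (ℕ → Fin κ)} {K : ℕ} {s : List (Fin κ)}
    (hs : s.length ≤ K)
    (hd : EMetric.hausdorffEdist S T < ENNReal.ofReal ((1/2 : ℝ)^K))
    (h : (S ∩ cylSet s).Nonempty) : (T ∩ cylSet s).Nonempty := by
  obtain ⟨y, hyS, hys⟩ := h
  obtain ⟨z, hzT, hz⟩ := EMetric.exists_edist_lt_of_hausdorffEdist_lt hyS hd
  have hdist : dist y z < (1/2 : ℝ)^K := by rwa [edist_lt_ofReal] at hz
  refine ⟨z, hzT, ?_⟩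
  rw [mem_cylSet_iff, pre_eq_iff] at hys ⊢
  intro i
  rw [← PiNat.apply_eq_of_dist_lt hdist (le_trans (Nat.le_of_lt_succ (Nat.lt_succ_of_lt i.2)) hs)]
  exact hys i

lemma bddAbove_NNset (Γ A : Set (ℕ → Fin κ)) (m : ℕ) :
    ∀ k ∈ {k : ℕ | ∃ A' : Set (ℕ → Fin κ), IsMicroset Γ A A' ∧
      k = {w : List (Fin κ) | w.length = m ∧ isPrefixWord Γ w ∧
        (A' ∩ cylSet w).Nonempty}.ncard}, k ≤ κ ^ m := by
  rintro k ⟨A', -, rfl⟩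
  have := words_ncard_le (κ := κ) m (fun w => isPrefixWord Γ w ∧ (A' ∩ cylSet w).Nonempty)
  have heq : {w : List (Fin κ) | w.length = m ∧ isPrefixWord Γ w ∧ (A' ∩ cylSet w).Nonempty}
      = {w : List (Fin κ) | w.length = m ∧ (isPrefixWord Γ w ∧ (A' ∩ cylSet w).Nonempty)} := rfl
  rw [heq]
  exact this

/-- Key counting lemma: extensions within any cylinder of a microset are counted by `NN`. -/
lemma count_le_NN {Γ A A' : Set (ℕ → Fin κ)} (hΓs : shiftMap '' Γ ⊆ Γ) (hA : A ⊆ Γ)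
    (hAc : IsCompact A) (hA' : IsMicroset Γ A A') (v : List (Fin κ)) (m : ℕ) :
    {w : List (Fin κ) | w.length = m ∧ (A' ∩ cylSet (v ++ w)).Nonempty}.ncard ≤ NN Γ A m := by
  obtain ⟨hA'Γ, hA'c, wseq, hws⟩ := hA'
  set K := v.length + m with hK
  have hδ : (0:ENNReal) < ENNReal.ofReal ((1/2 : ℝ)^K) := ENNReal.ofReal_pos.2 (by positivity)
  obtain ⟨n, hn⟩ := (hws.eventually (Iio_mem_nhds hδ)).exists
  set p := wseq n with hp
  have hsets : {w : List (Fin κ) | w.length = m ∧ (A' ∩ cylSet (v ++ w)).Nonempty}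
      = {w : List (Fin κ) | w.length = m ∧ (miniset (p ++ v) A ∩ cylSet w).Nonempty} := by
    ext w
    simp only [Set.mem_setOf_eq]
    constructor
    · rintro ⟨hlen, hne⟩
      refine ⟨hlen, ?_⟩
      have hlen2 : (v ++ w).length ≤ K := by simp [hlen, hK]
      rw [EMetric.hausdorffEdist, Metric.hausdorffEDist_comm] at hn
      have h2 := cyl_nonempty_of_close hlen2 hn hne
      rw [miniset_inter_cyl, ← List.append_assoc] at h2
      exact miniset_inter_cyl.2 h2
    · rintro ⟨hlen, hne⟩
      refine ⟨hlen, ?_⟩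
      have hlen2 : (v ++ w).length ≤ K := by simp [hlen, hK]
      rw [miniset_inter_cyl, List.append_assoc, ← miniset_inter_cyl] at hne
      exact cyl_nonempty_of_close hlen2 hn hne
  rw [hsets]
  have hmem : {w : List (Fin κ) | w.length = m ∧ (miniset (p ++ v) A ∩ cylSet w).Nonempty}.ncard
      ∈ {k : ℕ | ∃ A'' : Set (ℕ → Fin κ), IsMicroset Γ A A'' ∧
        k = {w : List (Fin κ) | w.length = m ∧ isPrefixWord Γ w ∧
          (A'' ∩ cylSet w).Nonempty}.ncard} := by
    refine ⟨miniset (p ++ v) A, miniset_isMicroset hΓs hA hAc _, ?_⟩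
    congr 1
    ext w
    simp only [Set.mem_setOf_eq]
    constructor
    · rintro ⟨hlen, hne⟩
      obtain ⟨z, hz1, hz2⟩ := hne
      exact ⟨hlen, ⟨z, miniset_subset hΓs hA _ hz1, hz2⟩, ⟨z, hz1, hz2⟩⟩
    · rintro ⟨hlen, -, hne⟩
      exact ⟨hlen, hne⟩
  exact le_csSup ⟨κ ^ m, fun k hk => bddAbove_NNset Γ A m k hk⟩ hmem

end Scratch

open Scratch in
set_option maxHeartbeats 4000000 in
/-- for a Moran construction with (M3), the uniform finite
clustering property and `diam(E_i) ≤ C ᾱⁿ` on `Γ_n`, every microset `A'` of a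
compact `A ⊆ Γ` satisfies `dim_A(π(A')) ≤ lim_n log N_n(A) / log ᾱ^{-n}`. -/
theorem assouad_of_microset_le {X : Type*} [MetricSpace X] [CompleteSpace X]
    {κ : ℕ} (hκ : 2 ≤ κ) (Γ : Set (ℕ → Fin κ)) (hΓc : IsCompact Γ)
    (hΓs : shiftMap '' Γ ⊆ Γ) (E : List (Fin κ) → Set X)
    (hclosed : ∀ w, isPrefixWord Γ w → IsClosed (E w))
    (hbdd : ∀ w, isPrefixWord Γ w → Bornology.IsBounded (E w))
    (hpos : ∀ w, isPrefixWord Γ w → 0 < diam (E w))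
    (hM1 : ∀ w, isPrefixWord Γ w → w ≠ [] → E w ⊆ E w.dropLast)
    (hM2 : ∀ x ∈ Γ, Tendsto (fun n => diam (E (pre x n))) atTop (nhds 0))
    (D : ℝ) (hD : 1 ≤ D)
    (hM3 : ∀ v w : List (Fin κ), isPrefixWord Γ (v ++ w) →
      diam (E (v ++ w)) ≤ D * diam (E v) * diam (E w))
    (π : (ℕ → Fin κ) → X) (hπ : ∀ x ∈ Γ, ∀ n : ℕ, π x ∈ E (pre x n))
    (hufcp : ∃ M : ℕ, ∀ x ∈ π '' Γ, ∀ r : ℝ, 0 < r →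
      (GammaXR Γ E x r).Finite ∧ (GammaXR Γ E x r).ncard ≤ M)
    (C αu : ℝ) (hC : 1 ≤ C) (hαu0 : 0 < αu) (hαu1 : αu < 1)
    (hdecay : ∀ n : ℕ, ∀ x ∈ Γ, diam (E (pre x n)) ≤ C * αu ^ n)
    (A A' : Set (ℕ → Fin κ)) (hA : A ⊆ Γ) (hAc : IsCompact A)
    (hA' : IsMicroset Γ A A') (L : ℝ)
    (hL : Tendsto (fun n : ℕ => Real.log (NN Γ A n) / ((n : ℝ) * Real.log (1 / αu)))
      atTop (nhds L)) :
    assouadDim (π '' A') ≤ L := by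
  classical
  have hαinv : 1 < 1/αu := one_lt_one_div hαu0 hαu1
  have hlog : 0 < Real.log (1/αu) := Real.log_pos hαinv
  -- L is nonnegative
  have hL0 : 0 ≤ L := by
    apply ge_of_tendsto hL
    rw [eventually_atTop]
    refine ⟨1, fun n hn => ?_⟩
    apply div_nonneg
    · rcases Nat.eq_zero_or_pos (NN Γ A n) with h0 | h1
      · simp [h0]
      · exact Real.log_nonneg (by exact_mod_cast h1)
    · exact mul_nonneg (Nat.cast_nonneg n) hlog.le
  -- main claim: every t > L belongs to the defining set
  have hS : ∀ t : ℝ, L < t →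
      t ∈ {t : ℝ | ∃ C : ℝ, 1 ≤ C ∧ ∀ x ∈ π '' A', ∀ R u : ℝ, 0 < u → u < R →
        ∃ F : Finset X, ↑F ⊆ π '' A' ∧ (F.card : ℝ) ≤ C * (R / u) ^ t ∧
          π '' A' ∩ ball x R ⊆ ⋃ y ∈ F, ball y u} := by
    intro t ht
    set ε := (t - L)/2 with hεdef
    have hε0 : 0 < ε := by simp only [hεdef]; linarith
    have hLε : L + ε ≤ t := by simp only [hεdef]; linarith
    have hLε0 : 0 ≤ L + ε := by linarith
    -- growth bound on NN
    obtain ⟨N, hN⟩ := eventually_atTop.1 (hL.eventually (gt_mem_nhds (by linarith : L < L + ε)))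
    set N' := max N 1 with hN'def
    set CN := ((κ:ℝ))^N' with hCNdef
    have hκ1 : (1:ℝ) ≤ (κ:ℝ) := by exact_mod_cast le_trans one_le_two hκ
    have hCN1 : 1 ≤ CN := one_le_pow₀ hκ1
    have hNNr : ∀ m : ℕ, (NN Γ A m : ℝ) ≤ CN * (1/αu) ^ ((m:ℝ)*(L+ε)) := by
      intro m
      by_cases hm : N' ≤ m
      · have hm1 : 1 ≤ m := le_trans (le_max_right N 1) hm
        have hd : 0 < (m:ℝ) * Real.log (1/αu) :=
          mul_pos (by exact_mod_cast hm1) hlog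
        have hseq := hN m (le_trans (le_max_left N 1) hm)
        rcases Nat.eq_zero_or_pos (NN Γ A m) with h0 | h1
        · rw [h0]; push_cast; positivity
        · have hposn : (0:ℝ) < NN Γ A m := by exact_mod_cast h1
          have hlogle : Real.log (NN Γ A m) ≤ ((m:ℝ) * Real.log (1/αu)) * (L+ε) := by
            rw [div_lt_iff₀ hd] at hseq
            exact hseq.le.trans_eq (mul_comm _ _)
          calc (NN Γ A m : ℝ) = Real.exp (Real.log (NN Γ A m)) := (Real.exp_log hposn).symm
            _ ≤ Real.exp (((m:ℝ) * Real.log (1/αu)) * (L+ε)) := Real.exp_le_exp.2 hlogle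
            _ = (1/αu) ^ ((m:ℝ)*(L+ε)) := by
                rw [Real.rpow_def_of_pos (by positivity)]
                ring_nf
            _ ≤ CN * (1/αu) ^ ((m:ℝ)*(L+ε)) :=
                le_mul_of_one_le_left (Real.rpow_nonneg (by positivity) _) hCN1
      · push_neg at hm
        have h1 : (NN Γ A m : ℝ) ≤ (κ:ℝ)^m := by exact_mod_cast NN_le_pow Γ A m
        have h2 : ((κ:ℝ))^m ≤ CN := pow_le_pow_right₀ hκ1 hm.le
        have h3 : (1:ℝ) ≤ (1/αu) ^ ((m:ℝ)*(L+ε)) :=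
          Real.one_le_rpow hαinv.le (by positivity)
        calc (NN Γ A m : ℝ) ≤ CN := h1.trans h2
          _ = CN * 1 := (mul_one _).symm
          _ ≤ CN * (1/αu) ^ ((m:ℝ)*(L+ε)) := by
              exact mul_le_mul_of_nonneg_left h3 (by positivity)
    -- cutoff depth N₀
    obtain ⟨N₀, hN₀⟩ : ∃ N₀ : ℕ, C * αu ^ N₀ < 1 := by
      obtain ⟨N₀, h⟩ := exists_pow_lt_of_lt_one (show (0:ℝ) < 1/C by positivity) hαu1
      refine ⟨N₀, ?_⟩
      calc C * αu ^ N₀ < C * (1/C) := by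
            exact mul_lt_mul_of_pos_left h (by positivity)
        _ = 1 := by field_simp
    set Vbig : Finset (List (Fin κ)) :=
      (Finset.range (N₀+1)).biUnion
        (fun j => (Finset.univ : Finset (Fin j → Fin κ)).image List.ofFn) with hVbig
    set Kc := Vbig.card with hKc
    obtain ⟨M, hM⟩ := hufcp
    set Cbig := max 1 (((M + Kc : ℕ):ℝ) * CN * ((D*C/αu) ^ (L+ε))) with hCbig
    refine ⟨Cbig, le_max_left _ _, ?_⟩
    intro x hx R u hu huR
    have hR0 : 0 < R := hu.trans huR
    have hRu1 : 1 < R / u := (one_lt_div hu).2 huR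
    set ρ := min R 1 with hρdef
    have hρ0 : 0 < ρ := lt_min hR0 one_pos
    have hρR : ρ ≤ R := min_le_left _ _
    -- depth m
    have hDC0 : 0 < D * C * ρ := by positivity
    have hmex : ∃ m : ℕ, D * C * ρ * αu ^ m < u := by
      obtain ⟨m, h⟩ := exists_pow_lt_of_lt_one (show (0:ℝ) < u / (D*C*ρ) by positivity) hαu1
      refine ⟨m, ?_⟩
      calc D * C * ρ * αu ^ m < D * C * ρ * (u / (D*C*ρ)) :=
            mul_lt_mul_of_pos_left h hDC0
        _ = u := by field_simp
    obtain ⟨m, hmspec, hmmin⟩ : ∃ m : ℕ, D * C * ρ * αu ^ m < u ∧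
        ∀ k < m, ¬ (D * C * ρ * αu ^ k < u) :=
      ⟨Nat.find hmex, Nat.find_spec hmex, fun k hk => Nat.find_min hmex hk⟩
    have hminv : (1/αu)^m ≤ D*C*(R/u)*(1/αu) := by
      rcases Nat.eq_zero_or_pos m with h0 | h1
      · rw [h0, pow_zero]
        have h2 : (1:ℝ) ≤ D * C := by nlinarith
        have h3 : (1:ℝ) ≤ D * C * (R/u) := by nlinarith
        nlinarith [hαinv, h3]
      · obtain ⟨k, hk⟩ : ∃ k, m = k + 1 := ⟨m - 1, by omega⟩
        have hmin : ¬ (D * C * ρ * αu ^ k < u) := hmmin k (by omega)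
        push_neg at hmin
        have hle : u ≤ D * C * R * αu ^ k := by
          calc u ≤ D * C * ρ * αu ^ k := hmin
            _ ≤ D * C * R * αu ^ k := by
                apply mul_le_mul_of_nonneg_right _ (by positivity)
                nlinarith [hρR, hD, hC]
        rw [hk, one_div_pow]
        rw [div_le_iff₀ (by positivity)]
        have hexp : D * C * (R / u) * (1 / αu) * αu ^ (k + 1) = D * C * R * αu ^ k / u := by
          field_simp; ring
        rw [hexp, le_div_iff₀ hu]
        nlinarith [hle, pow_pos hαu0 k]
    -- the finite family of cylinders at scale ρ
    have hxΓ : x ∈ π '' Γ := Set.image_mono hA'.1 hx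
    have hVfin := (hM x hxΓ R hR0).1
    set V : Finset (List (Fin κ)) := hVfin.toFinset ∪ Vbig with hVdef
    have hVcard : V.card ≤ M + Kc := by
      calc V.card ≤ hVfin.toFinset.card + Vbig.card := Finset.card_union_le _ _
        _ ≤ M + Kc := by
            apply Nat.add_le_add _ le_rfl
            rw [← Set.ncard_eq_toFinset_card _ hVfin]
            exact (hM x hxΓ R hR0).2
    have hWfin : ∀ v : List (Fin κ),
        {w : List (Fin κ) | w.length = m ∧ (A' ∩ cylSet (v ++ w)).Nonempty}.Finite :=
      fun v => words_finite m _
    set Wf : List (Fin κ) → Finset (List (Fin κ)) := fun v => (hWfin v).toFinset with hWf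
    set f : List (Fin κ) → List (Fin κ) → X := fun v w =>
      if h : (A' ∩ cylSet (v ++ w)).Nonempty then π h.some else x with hf
    set F : Finset X := V.biUnion (fun v => (Wf v).image (f v)) with hF
    refine ⟨F, ?_, ?_, ?_⟩
    · -- F ⊆ π '' A'
      intro z hz
      simp only [hF, Finset.coe_biUnion, Set.mem_iUnion, Finset.mem_coe,
        Finset.mem_image] at hz
      obtain ⟨v, -, w, hw, rfl⟩ := hz
      have hne : (A' ∩ cylSet (v ++ w)).Nonempty := ((hWfin v).mem_toFinset.1 hw).2
      simp only [hf, dif_pos hne]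
      exact ⟨hne.some, hne.some_mem.1, rfl⟩
    · -- cardinality bound
      have hc1 : F.card ≤ (M + Kc) * NN Γ A m := by
        calc F.card ≤ ∑ v ∈ V, ((Wf v).image (f v)).card := Finset.card_biUnion_le
          _ ≤ ∑ v ∈ V, NN Γ A m := by
              apply Finset.sum_le_sum
              intro v _
              refine Finset.card_image_le.trans ?_
              rw [← Set.ncard_eq_toFinset_card _ (hWfin v)]
              exact count_le_NN hΓs hA hAc hA' v m
          _ = V.card * NN Γ A m := by rw [Finset.sum_const, smul_eq_mul]
          _ ≤ (M + Kc) * NN Γ A m := Nat.mul_le_mul_right _ hVcard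
      have hrpow0 : (0:ℝ) ≤ (1/αu)^m := by positivity
      calc (F.card : ℝ) ≤ ((M + Kc : ℕ):ℝ) * (NN Γ A m : ℝ) := by exact_mod_cast hc1
        _ ≤ ((M + Kc : ℕ):ℝ) * (CN * (1/αu) ^ ((m:ℝ)*(L+ε))) :=
            mul_le_mul_of_nonneg_left (hNNr m) (Nat.cast_nonneg _)
        _ = ((M + Kc : ℕ):ℝ) * CN * (((1/αu)^m : ℝ)) ^ (L+ε) := by
            rw [show ((m:ℝ)*(L+ε)) = ((m:ℝ))*(L+ε) from rfl, Real.rpow_mul (by positivity),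
              Real.rpow_natCast]
            ring
        _ ≤ ((M + Kc : ℕ):ℝ) * CN * ((D*C*(R/u)*(1/αu))) ^ (L+ε) := by
            apply mul_le_mul_of_nonneg_left _ (by positivity)
            exact Real.rpow_le_rpow hrpow0 hminv hLε0
        _ = (((M + Kc : ℕ):ℝ) * CN * ((D*C/αu) ^ (L+ε))) * (R/u) ^ (L+ε) := by
            rw [show D*C*(R/u)*(1/αu) = (D*C/αu)*(R/u) by ring,
              Real.mul_rpow (by positivity) (by positivity)]
            ring
        _ ≤ Cbig * (R/u) ^ t := by
            apply mul_le_mul (le_max_right _ _)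
              (Real.rpow_le_rpow_of_exponent_le hRu1.le hLε)
              (Real.rpow_nonneg (by positivity) _)
              (le_trans zero_le_one (le_max_left _ _))
    · -- covering
      rintro z ⟨⟨y, hyA', rfl⟩, hzball⟩
      have hyΓ : y ∈ Γ := hA'.1 hyA'
      have hnex : ∃ n : ℕ, diam (E (pre y n)) ≤ ρ := by
        obtain ⟨n, hn⟩ := ((hM2 y hyΓ).eventually (Iio_mem_nhds hρ0)).exists
        exact ⟨n, hn.le⟩
      obtain ⟨ny, hny, hnymin⟩ : ∃ n : ℕ, diam (E (pre y n)) ≤ ρ ∧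
          ∀ k < n, ¬ (diam (E (pre y k)) ≤ ρ) :=
        ⟨Nat.find hnex, Nat.find_spec hnex, fun k hk => Nat.find_min hnex hk⟩
      set v := pre y ny with hvdef
      have hvpw : isPrefixWord Γ v := ⟨y, hyΓ, by rw [hvdef, pre_length]⟩
      have hvV : v ∈ V := by
        by_cases hcase : ny ≤ N₀
        · apply Finset.mem_union.2 (Or.inr _)
          apply Finset.mem_biUnion.2
          exact ⟨ny, Finset.mem_range.2 (Nat.lt_succ_of_le hcase),
            Finset.mem_image.2 ⟨fun k : Fin ny => y k, Finset.mem_univ _, rfl⟩⟩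
        · push_neg at hcase
          have hmin := hnymin N₀ hcase
          push_neg at hmin
          have hρlt : ρ < 1 := by
            calc ρ < diam (E (pre y N₀)) := hmin
              _ ≤ C * αu ^ N₀ := hdecay N₀ y hyΓ
              _ < 1 := hN₀
          have hρeq : ρ = R := by
            rcases le_total R 1 with h | h
            · rw [hρdef, min_eq_left h]
            · rw [hρdef, min_eq_right h] at hρlt; linarith
          apply Finset.mem_union.2 (Or.inl _)
          apply hVfin.mem_toFinset.2
          obtain ⟨k, hk⟩ : ∃ k, ny = k + 1 := ⟨ny - 1, by omega⟩
          have hdrop : v.dropLast = pre y k := by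
            rw [hvdef, hk, pre_succ, List.concat_eq_append, List.dropLast_concat]
          have hgtk : ρ < diam (E (pre y k)) := by
            have h5 := hnymin k (show k < ny by omega)
            push_neg at h5
            exact h5
          refine ⟨⟨hvpw, ?_, ?_, ?_⟩, ⟨π y, hπ y hyΓ ny, hzball⟩⟩
          · intro hnil
            have : v.length = 0 := by rw [hnil]; rfl
            rw [hvdef, pre_length] at this
            omega
          · rw [← hρeq]; exact hny
          · rw [hdrop, ← hρeq]; exact hgtk
      set wy := pre (shiftK ny y) m with hwydef
      have hvw : v ++ wy = pre y (ny + m) := (pre_add y ny m).symm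
      have hyvw : y ∈ cylSet (v ++ wy) := by rw [hvw]; exact pre_mem_cylSet y (ny+m)
      have hne : (A' ∩ cylSet (v ++ wy)).Nonempty := ⟨y, hyA', hyvw⟩
      have hwW : wy ∈ Wf v := (hWfin v).mem_toFinset.2 ⟨by rw [hwydef, pre_length], hne⟩
      have hfF : f v wy ∈ F :=
        Finset.mem_biUnion.2 ⟨v, hvV, Finset.mem_image.2 ⟨wy, hwW, rfl⟩⟩
      refine Set.mem_iUnion₂.2 ⟨f v wy, hfF, ?_⟩
      have hlenvw : (v ++ wy).length = ny + m := by
        rw [hvw, pre_length]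
      have hpw : isPrefixWord Γ (v ++ wy) := ⟨y, hyΓ, by rw [hlenvw, ← hvw]⟩
      have hπy : π y ∈ E (v ++ wy) := by rw [hvw]; exact hπ y hyΓ (ny+m)
      simp only [hf, dif_pos hne]
      set y' := hne.some with hy'def
      have hy' : y' ∈ A' ∩ cylSet (v ++ wy) := hne.some_mem
      have hy'Γ : y' ∈ Γ := hA'.1 hy'.1
      have hπy' : π y' ∈ E (v ++ wy) := by
        have h1 := hπ y' hy'Γ (ny + m)
        have hpre : pre y' (ny+m) = v ++ wy := by
          have h2 := hy'.2
          rwa [mem_cylSet_iff, hlenvw] at h2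
        rwa [hpre] at h1
      have hdiam : diam (E (v ++ wy)) ≤ D * C * ρ * αu ^ m := by
        have h3 := hM3 v wy hpw
        have h4 : diam (E wy) ≤ C * αu ^ m :=
          hdecay m (shiftK ny y) (shiftK_mem hΓs ny hyΓ)
        calc diam (E (v++wy)) ≤ D * diam (E v) * diam (E wy) := h3
          _ ≤ D * ρ * (C * αu^m) := by
              apply mul_le_mul
              · exact mul_le_mul_of_nonneg_left hny (by linarith)
              · exact h4
              · exact diam_nonneg
              · positivity
          _ = D * C * ρ * αu^m := by ring
      have hdist : dist (π y) (π y') ≤ diam (E (v ++ wy)) :=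
        dist_le_diam_of_mem (hbdd _ hpw) hπy hπy'
      exact mem_ball.2 (lt_of_le_of_lt (hdist.trans hdiam) hmspec)
  -- conclude
  by_cases hbb : BddBelow {t : ℝ | ∃ C : ℝ, 1 ≤ C ∧ ∀ x ∈ π '' A', ∀ R u : ℝ, 0 < u → u < R →
      ∃ F : Finset X, ↑F ⊆ π '' A' ∧ (F.card : ℝ) ≤ C * (R / u) ^ t ∧
        π '' A' ∩ ball x R ⊆ ⋃ y ∈ F, ball y u}
  · exact le_of_forall_gt_imp_ge_of_dense fun t hlt => csInf_le hbb (hS t hlt)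
  · rw [assouadDim, Real.sInf_of_not_bddBelow hbb]
    exact hL0
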